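/- Let E be an elliptic curve over a finite field F_q, and suppose d, m, n are positive integers with m | d | gcd(n, q-1), and E[n](F_q) ≅ (ℤ/dℤ) × (ℤ/nℤ). Fix a primitive m-th root of unity ζ_m ∈ F_q. Then the number of pairs (P,Q) of points of E(F_q) with ord(P) = m, ord(Q) = n, and Weil pairing e_m(P, (n/m)Q) = ζ_m equals m·φ(n)·ψ(n)/ψ(n/d). -/

import Mathlib

open WeierstrassCurve WeierstrassCurve.Affine

/-- `ψ(n) = n ∏_{p ∣ n} (1 + 1/p)` as a rational number. -/
def psiQ (n : ℕ) : ℚ := n * ∏ p ∈ n.primeFactors, (1 + 1 / (p : ℚ))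

/-- The subgroup of `n`-torsion elements of an additive commutative group. -/
def torsionSubgroup (G : Type*) [AddCommGroup G] (n : ℕ) : AddSubgroup G where
  carrier := {P | n • P = 0}
  add_mem' := by
    intro a b ha hb
    simp only [Set.mem_setOf_eq, smul_add] at *
    rw [ha, hb, add_zero]
  zero_mem' := by simp
  neg_mem' := by
    intro a ha
    simp only [Set.mem_setOf_eq, smul_neg] at *
    rw [ha, neg_zero]

/-!
The pairs are counted by fibring over `Q`. For `R = (n/m) • Q`, which has order `m`, the map
`P ↦ e_m(P, R)` is a character of `E[m] ≅ (ℤ/mℤ)²` onto the `m`-th roots of unity: the order `t`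
of its image satisfies `e_m(P, t • R) = 1` for all `P`, so `t • R = 0` by nondegeneracy and
`m ∣ t`. Hence every fibre has `m² / m = m` points, and each `P` over the primitive root `ζ_m`
automatically has order `m`. What remains is the number of elements of order `n` in
`ℤ/dℤ × ℤ/nℤ`: it is multiplicative in `n` by the Chinese remainder theorem, and for `n = p^(k+1)`,
`d = p^j` it is the number of elements not killed by `p^k`.
-/

lemma psiQ_pos {n : ℕ} (hn : n ≠ 0) : 0 < psiQ n :=
  mul_pos (by positivity) (Finset.prod_pos fun p _ => by positivity)

lemma psiQ_mul_of_coprime {a b : ℕ} (hab : a.Coprime b) : psiQ (a * b) = psiQ a * psiQ b := by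
  unfold psiQ
  rw [hab.primeFactors_mul, Finset.prod_union hab.disjoint_primeFactors]
  push_cast
  ring

lemma psiQ_prime_pow_succ {p : ℕ} (hp : p.Prime) (k : ℕ) :
    psiQ (p ^ (k + 1)) = p ^ k * (p + 1) := by
  have : (p : ℚ) ≠ 0 := by exact_mod_cast hp.ne_zero
  rw [psiQ, Nat.primeFactors_prime_pow k.succ_ne_zero hp, Finset.prod_singleton]
  field_simp
  push_cast
  ring

lemma ZMod.card_nsmul_eq_zero (a c : ℕ) [NeZero a] :
    Nat.card {x : ZMod a // c • x = 0} = a.gcd c := by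
  simpa using IsAddCyclic.card_nsmulAddMonoidHom_ker (ZMod a) c

lemma card_prod_nsmul_eq_zero {A B : Type*} [AddMonoid A] [AddMonoid B] (c : ℕ) :
    Nat.card {x : A × B // c • x = 0} =
      Nat.card {a : A // c • a = 0} * Nat.card {b : B // c • b = 0} := by
  rw [← Nat.card_prod]
  exact Nat.card_congr <| (Equiv.subtypeEquivRight fun x => Prod.ext_iff).trans
    (Equiv.subtypeProdEquivProd (p := fun a : A => c • a = 0) (q := fun b : B => c • b = 0))

lemma ZMod.nsmul_eq_zero_of_dvd {a c : ℕ} (h : a ∣ c) (x : ZMod a) : c • x = 0 := by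
  rw [nsmul_eq_mul, (ZMod.natCast_eq_zero_iff c a).2 h, zero_mul]

lemma ZMod.prod_nsmul_eq_zero_of_dvd {a b c : ℕ} (ha : a ∣ c) (hb : b ∣ c) (x : ZMod a × ZMod b) :
    c • x = 0 :=
  Prod.ext (ZMod.nsmul_eq_zero_of_dvd ha x.1) (ZMod.nsmul_eq_zero_of_dvd hb x.2)

lemma Nat.card_subtype_add_card_subtype_not {α : Type*} [Finite α] (p : α → Prop) :
    Nat.card {a // p a} + Nat.card {a // ¬p a} = Nat.card α := by
  classical
  rw [← Nat.card_sum, Nat.card_congr (Equiv.sumCompl p)]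

lemma card_addOrderOf_eq_prime_pow_add {p j k : ℕ} (hp : p.Prime) (hj : j ≤ k + 1) :
    Nat.card {x : ZMod (p ^ j) × ZMod (p ^ (k + 1)) // addOrderOf x = p ^ (k + 1)} +
      (p ^ j).gcd (p ^ k) * p ^ k = p ^ j * p ^ (k + 1) := by
  have := Fact.mk hp
  have hord (x : ZMod (p ^ j) × ZMod (p ^ (k + 1))) :
      addOrderOf x = p ^ (k + 1) ↔ ¬p ^ k • x = 0 := by
    refine ⟨fun h h0 => ?_, fun h0 => addOrderOf_eq_prime_pow h0 ?_⟩
    · have := addOrderOf_dvd_of_nsmul_eq_zero h0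
      rw [h, Nat.pow_dvd_pow_iff_le_right hp.one_lt] at this
      omega
    · exact ZMod.prod_nsmul_eq_zero_of_dvd (pow_dvd_pow p hj) dvd_rfl x
  have htors : Nat.card {x : ZMod (p ^ j) × ZMod (p ^ (k + 1)) // p ^ k • x = 0} =
      (p ^ j).gcd (p ^ k) * p ^ k := by
    rw [card_prod_nsmul_eq_zero, ZMod.card_nsmul_eq_zero, ZMod.card_nsmul_eq_zero,
      Nat.gcd_eq_right (pow_dvd_pow p k.le_succ)]
  rw [Nat.card_congr (Equiv.subtypeEquivRight hord), ← htors, add_comm,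
    Nat.card_subtype_add_card_subtype_not, Nat.card_prod, Nat.card_zmod, Nat.card_zmod]

lemma addOrderOf_prod_eq_mul_iff {A B : Type*} [AddMonoid A] [AddMonoid B] {a b : ℕ}
    (ha : a ≠ 0) (hb : b ≠ 0) (hab : a.Coprime b) {u : A} {v : B}
    (hu : addOrderOf u ∣ a) (hv : addOrderOf v ∣ b) :
    addOrderOf (u, v) = a * b ↔ addOrderOf u = a ∧ addOrderOf v = b := by
  have hcop : (addOrderOf u).Coprime (addOrderOf v) :=
    (hab.coprime_dvd_left hu).coprime_dvd_right hv
  rw [Prod.addOrderOf, hcop.lcm_eq_mul]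
  refine ⟨fun h => ?_, fun ⟨h1, h2⟩ => by rw [h1, h2]⟩
  have h1 := Nat.le_of_dvd (Nat.pos_of_ne_zero ha) hu
  have h2 := Nat.le_of_dvd (Nat.pos_of_ne_zero hb) hv
  constructor <;> nlinarith [Nat.pos_of_ne_zero ha, Nat.pos_of_ne_zero hb]

lemma card_addOrderOf_eq_mul_of_coprime {d₁ d₂ a b : ℕ} (ha : a ≠ 0) (hb : b ≠ 0)
    (hab : a.Coprime b) (hd₁ : d₁ ∣ a) (hd₂ : d₂ ∣ b) :
    Nat.card {x : ZMod (d₁ * d₂) × ZMod (a * b) // addOrderOf x = a * b} =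
      Nat.card {u : ZMod d₁ × ZMod a // addOrderOf u = a} *
        Nat.card {v : ZMod d₂ × ZMod b // addOrderOf v = b} := by
  have hd : d₁.Coprime d₂ := (hab.coprime_dvd_left hd₁).coprime_dvd_right hd₂
  let Φ : ZMod (d₁ * d₂) × ZMod (a * b) ≃+ (ZMod d₁ × ZMod a) × (ZMod d₂ × ZMod b) :=
    ((ZMod.chineseRemainder hd).toAddEquiv.prodCongr (ZMod.chineseRemainder hab).toAddEquiv).trans
      (AddEquiv.prodProdProdComm _ _ _ _)
  rw [← Nat.card_prod]
  refine Nat.card_congr ((Φ.toEquiv.subtypeEquiv fun x => ?_).trans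
    (Equiv.subtypeProdEquivProd (p := fun u => addOrderOf u = a) (q := fun v => addOrderOf v = b)))
  rw [← Φ.addOrderOf_eq x]
  exact addOrderOf_prod_eq_mul_iff ha hb hab
    (addOrderOf_dvd_of_nsmul_eq_zero (ZMod.prod_nsmul_eq_zero_of_dvd hd₁ dvd_rfl _))
    (addOrderOf_dvd_of_nsmul_eq_zero (ZMod.prod_nsmul_eq_zero_of_dvd hd₂ dvd_rfl _))

theorem card_addOrderOf_eq_mul_psiQ {n d : ℕ} (hn : n ≠ 0) (hdn : d ∣ n) :
    (Nat.card {x : ZMod d × ZMod n // addOrderOf x = n} : ℚ) * psiQ (n / d) =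
      n.totient * psiQ n := by
  induction n using Nat.recOnPosPrimePosCoprime generalizing d with
  | zero => exact absurd rfl hn
  | one =>
    obtain rfl := Nat.dvd_one.1 hdn
    simp [psiQ]
  | prime_pow p k hp hk =>
    obtain ⟨k, rfl⟩ := Nat.exists_eq_add_one_of_ne_zero hk.ne'
    obtain ⟨j, hj, rfl⟩ := (Nat.dvd_prime_pow hp).1 hdn
    have hcount := congrArg (Nat.cast : ℕ → ℚ) (card_addOrderOf_eq_prime_pow_add hp hj)
    push_cast at hcount
    rw [Nat.pow_div hj hp.pos, Nat.totient_prime_pow_succ hp, psiQ_prime_pow_succ hp]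
    rcases hj.lt_or_eq with hj | rfl
    · obtain ⟨i, rfl⟩ := Nat.exists_eq_add_of_le (Nat.lt_succ_iff.1 hj)
      rw [Nat.gcd_eq_left (pow_dvd_pow p (Nat.le_add_right j i))] at hcount
      rw [show j + i + 1 - j = i + 1 by omega, psiQ_prime_pow_succ hp,
        eq_sub_iff_add_eq.2 hcount]
      push_cast [Nat.cast_sub hp.one_le]
      ring
    · rw [Nat.gcd_eq_right (pow_dvd_pow p k.le_succ)] at hcount
      rw [Nat.sub_self, pow_zero, show psiQ 1 = 1 by simp [psiQ], eq_sub_iff_add_eq.2 hcount]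
      push_cast [Nat.cast_sub hp.one_le]
      ring
  | coprime a b ha hb hab iha ihb =>
    obtain ⟨d₁, d₂, hd₁, hd₂, rfl⟩ := Nat.dvd_mul.1 hdn
    have hquot : a * b / (d₁ * d₂) = a / d₁ * (b / d₂) := (Nat.div_mul_div_comm hd₁ hd₂).symm
    have hcop : (a / d₁).Coprime (b / d₂) :=
      (hab.coprime_dvd_left (Nat.div_dvd_of_dvd hd₁)).coprime_dvd_right (Nat.div_dvd_of_dvd hd₂)
    rw [card_addOrderOf_eq_mul_of_coprime (by omega) (by omega) hab hd₁ hd₂, hquot,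
      psiQ_mul_of_coprime hcop, Nat.totient_mul hab, psiQ_mul_of_coprime hab]
    push_cast
    linear_combination (Nat.card {v : ZMod d₂ × ZMod b // addOrderOf v = b} * psiQ (b / d₂) : ℚ) *
        iha (by omega) hd₁ + (a.totient * psiQ a : ℚ) * ihb (by omega) hd₂

lemma AddSubgroup.card_subtype_eq_of_addEquiv {G B : Type*} [AddCommGroup G] [AddCommGroup B]
    {H : AddSubgroup G} (φ : H ≃+ B) {p : G → Prop} {q : B → Prop} (hpH : ∀ P, p P → P ∈ H)
    (hpq : ∀ x : H, p x ↔ q (φ x)) :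
    Nat.card {P // p P} = Nat.card {y // q y} :=
  Nat.card_congr <|
    (Equiv.subtypeSubtypeEquivSubtype (hpH _)).symm.trans (φ.toEquiv.subtypeEquiv hpq)

section TorsionEquiv

variable {G B : Type*} [AddCommGroup G] [AddCommGroup B] {n : ℕ}

lemma card_nsmul_eq_zero_eq_of_torsion_equiv (φ : torsionSubgroup G n ≃+ B) {c : ℕ}
    (hc : c ∣ n) :
    Nat.card {P : G // c • P = 0} = Nat.card {y : B // c • y = 0} := by
  refine AddSubgroup.card_subtype_eq_of_addEquiv φ (fun P hP => ?_) fun x => ?_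
  · obtain ⟨s, rfl⟩ := hc
    show (c * s) • P = 0
    rw [mul_comm, mul_nsmul', hP, nsmul_zero]
  · rw [← map_nsmul, AddEquivClass.map_eq_zero_iff, ← AddSubgroup.coe_nsmul,
      ZeroMemClass.coe_eq_zero]

lemma card_addOrderOf_eq_of_torsion_equiv (φ : torsionSubgroup G n ≃+ B) :
    Nat.card {P : G // addOrderOf P = n} = Nat.card {y : B // addOrderOf y = n} := by
  refine AddSubgroup.card_subtype_eq_of_addEquiv φ (fun P hP => ?_) fun x => ?_
  · exact hP ▸ addOrderOf_nsmul_eq_zero P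
  · rw [AddEquiv.addOrderOf_eq, AddSubgroup.addOrderOf_coe]

end TorsionEquiv

lemma Nat.card_subtype_prod_eq_mul {α β : Type*} [Finite α] [Finite β] {p : α → Prop}
    {q : β → Prop} {r : α → β → Prop} {k : ℕ} (h : ∀ b, q b → Nat.card {a // p a ∧ r a b} = k) :
    Nat.card {x : α × β // p x.1 ∧ q x.2 ∧ r x.1 x.2} = Nat.card {b // q b} * k := by
  let e : {x : α × β // p x.1 ∧ q x.2 ∧ r x.1 x.2} ≃ Σ b : {b // q b}, {a // p a ∧ r a b} :=
    { toFun x := ⟨⟨x.1.2, x.2.2.1⟩, x.1.1, x.2.1, x.2.2.2⟩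
      invFun y := ⟨(y.2.1, y.1.1), y.2.2.1, y.1.2, y.2.2.2⟩ }
  have := Fintype.ofFinite {b // q b}
  rw [Nat.card_congr e, Nat.card_sigma, Finset.sum_congr rfl fun b _ => h b.1 b.2,
    Finset.sum_const, smul_eq_mul, Finset.card_univ, Nat.card_eq_fintype_card]

instance WeierstrassCurve.Affine.Point.instFinite {R : Type*} [CommRing R] [Finite R]
    (W : WeierstrassCurve.Affine R) : Finite W.Point :=
  Finite.of_injective
    (fun P : W.Point => match P with | .zero => none | .some x y _ => Option.some (x, y))
    (by rintro (_ | ⟨x, y, h⟩) (_ | ⟨x', y', h'⟩) hPQ <;> simp_all)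

lemma nsmul_nsmul_eq_zero {G : Type*} [AddCommMonoid G] {m : ℕ} {P : G} (k : ℕ)
    (hP : m • P = 0) : m • k • P = 0 := by
  rw [smul_comm, hP, nsmul_zero]

/-- The properties of the Weil pairing `e_m` that the count uses. -/
structure IsAltNondegPairing {G K : Type*} [AddCommGroup G] [CommMonoid K] (m : ℕ)
    (e : G → G → K) : Prop where
  map_add_left : ∀ P P' Q : G, m • P = 0 → m • P' = 0 → m • Q = 0 →
    e (P + P') Q = e P Q * e P' Q
  map_add_right : ∀ P Q Q' : G, m • P = 0 → m • Q = 0 → m • Q' = 0 →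
    e P (Q + Q') = e P Q * e P Q'
  self_eq_one : ∀ P : G, m • P = 0 → e P P = 1
  eq_zero_of_forall : ∀ P : G, m • P = 0 → (∀ Q : G, m • Q = 0 → e P Q = 1) → P = 0

namespace IsAltNondegPairing

variable {G K : Type*} [AddCommGroup G] {m : ℕ} {P Q R : G}

section CommMonoid

variable [CommMonoid K] {e : G → G → K}

lemma map_zero_left (he : IsAltNondegPairing m e) (hQ : m • Q = 0) : e 0 Q = 1 := by
  have := he.map_add_left 0 Q Q (nsmul_zero m) hQ hQ
  rwa [zero_add, he.self_eq_one Q hQ, mul_one, eq_comm] at this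

lemma map_zero_right (he : IsAltNondegPairing m e) (hP : m • P = 0) : e P 0 = 1 := by
  have := he.map_add_right P 0 P hP (nsmul_zero m) hP
  rwa [zero_add, he.self_eq_one P hP, mul_one, eq_comm] at this

lemma map_nsmul_left (he : IsAltNondegPairing m e) (k : ℕ) (hP : m • P = 0) (hQ : m • Q = 0) :
    e (k • P) Q = e P Q ^ k := by
  induction k with
  | zero => rw [zero_nsmul, pow_zero, he.map_zero_left hQ]
  | succ k ih =>
    rw [succ_nsmul, he.map_add_left _ _ _ (nsmul_nsmul_eq_zero k hP) hP hQ, ih, pow_succ]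

lemma map_nsmul_right (he : IsAltNondegPairing m e) (k : ℕ) (hP : m • P = 0) (hQ : m • Q = 0) :
    e P (k • Q) = e P Q ^ k := by
  induction k with
  | zero => rw [zero_nsmul, pow_zero, he.map_zero_right hP]
  | succ k ih =>
    rw [succ_nsmul, he.map_add_right _ _ _ hP (nsmul_nsmul_eq_zero k hQ) hQ, ih, pow_succ]

lemma mul_swap_eq_one (he : IsAltNondegPairing m e) (hP : m • P = 0) (hQ : m • Q = 0) :
    e P Q * e Q P = 1 := by
  have hPQ : m • (P + Q) = 0 := by rw [nsmul_add, hP, hQ, add_zero]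
  have := he.self_eq_one _ hPQ
  rwa [he.map_add_left P Q _ hP hQ hPQ, he.map_add_right P P Q hP hP hQ,
    he.map_add_right Q P Q hQ hP hQ, he.self_eq_one P hP, he.self_eq_one Q hQ, one_mul,
    mul_one] at this

lemma eq_zero_of_forall_left (he : IsAltNondegPairing m e) (hR : m • R = 0)
    (h : ∀ P : G, m • P = 0 → e P R = 1) : R = 0 :=
  he.eq_zero_of_forall R hR fun Q hQ => by
    simpa [h Q hQ] using he.mul_swap_eq_one hR hQ

lemma pow_eq_one (he : IsAltNondegPairing m e) (hP : m • P = 0) (hQ : m • Q = 0) :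
    e P Q ^ m = 1 := by
  rw [← he.map_nsmul_left m hP hQ, hP, he.map_zero_left hQ]

def charRight [NeZero m] (he : IsAltNondegPairing m e) (R : G) (hR : m • R = 0) :
    Multiplicative (torsionSubgroup G m) →* rootsOfUnity m K where
  toFun P := rootsOfUnity.mkOfPowEq (e P.toAdd R) (he.pow_eq_one P.toAdd.2 hR)
  map_one' := Subtype.ext <| Units.ext <| he.map_zero_left hR
  map_mul' P P' := Subtype.ext <| Units.ext <| he.map_add_left _ _ _ P.toAdd.2 P'.toAdd.2 hR

lemma coe_charRight [NeZero m] (he : IsAltNondegPairing m e) (hR : m • R = 0)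
    (P : Multiplicative (torsionSubgroup G m)) :
    ((he.charRight R hR P : Kˣ) : K) = e P.toAdd R :=
  rfl

lemma addOrderOf_eq_of_map_eq (he : IsAltNondegPairing m e) {ζ : K} (hζ : IsPrimitiveRoot ζ m)
    (hP : m • P = 0) (hR : m • R = 0) (h : e P R = ζ) : addOrderOf P = m :=
  Nat.dvd_antisymm (addOrderOf_dvd_of_nsmul_eq_zero hP) <| hζ.dvd_of_pow_eq_one _ <| by
    rw [← h, ← he.map_nsmul_left _ hP hR, addOrderOf_nsmul_eq_zero, he.map_zero_left hR]

end CommMonoid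

variable [CommRing K] [IsDomain K] {e : G → G → K} [NeZero m]

theorem charRight_surjective (he : IsAltNondegPairing m e) {ζ : K} (hζ : IsPrimitiveRoot ζ m)
    (hR : addOrderOf R = m) :
    Function.Surjective (he.charRight R (hR ▸ addOrderOf_nsmul_eq_zero R)) := by
  have hmR : m • R = 0 := hR ▸ addOrderOf_nsmul_eq_zero R
  set χ := he.charRight R hmR
  set t := Nat.card χ.range
  have htR : t • R = 0 := he.eq_zero_of_forall_left (nsmul_nsmul_eq_zero t hmR) fun P hP => by
    have h : (χ (.ofAdd ⟨P, hP⟩)) ^ t = 1 :=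
      congrArg Subtype.val (pow_card_eq_one' (G := χ.range) (x := ⟨_, ⟨_, rfl⟩⟩))
    have h' := congrArg (fun x : rootsOfUnity m K => ((x : Kˣ) : K)) h
    simp only [Subgroup.coe_pow, Units.val_pow_eq_pow_val, χ, coe_charRight, toAdd_ofAdd,
      OneMemClass.coe_one, Units.val_one] at h'
    rw [he.map_nsmul_right t hP hmR, h']
  have hmt : m ≤ t := Nat.le_of_dvd Nat.card_pos (hR ▸ addOrderOf_dvd_of_nsmul_eq_zero htR)
  have htm : t ≤ Nat.card (rootsOfUnity m K) := Subgroup.card_le_card_group _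
  rw [← MonoidHom.range_eq_top]
  exact Subgroup.eq_top_of_card_eq _ (le_antisymm htm (hζ.card_rootsOfUnity.symm ▸ hmt))

theorem card_addOrderOf_eq_and_map_eq (he : IsAltNondegPairing m e) {ζ : K}
    (hζ : IsPrimitiveRoot ζ m) (hG : Nat.card {P : G // m • P = 0} = m * m)
    (hR : addOrderOf R = m) :
    Nat.card {P : G // addOrderOf P = m ∧ e P R = ζ} = m := by
  have hmR : m • R = 0 := hR ▸ addOrderOf_nsmul_eq_zero R
  set χ := he.charRight R hmR
  have hsurj : Function.Surjective χ := he.charRight_surjective hζ hR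
  let ζ' : rootsOfUnity m K := rootsOfUnity.mkOfPowEq ζ hζ.pow_eq_one
  have hfiber : {P : G // addOrderOf P = m ∧ e P R = ζ} ≃ χ ⁻¹' {ζ'} :=
    (Equiv.subtypeEquivRight fun P =>
      ⟨fun h => ⟨h.1 ▸ addOrderOf_nsmul_eq_zero P, h.2⟩,
        fun h => ⟨he.addOrderOf_eq_of_map_eq hζ h.1 hmR h.2, h.2⟩⟩).trans <|
    (Equiv.subtypeSubtypeEquivSubtypeInter (· ∈ torsionSubgroup G m) (e · R = ζ)).symm.trans <|
    Multiplicative.ofAdd.subtypeEquiv fun _ =>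
      (Subtype.ext_iff.trans Units.ext_iff : χ _ = ζ' ↔ _).symm
  have hcard : Nat.card (Multiplicative (torsionSubgroup G m)) = m * m := hG
  have hker : Nat.card χ.ker * m = m * m := by
    rw [← hcard, ← χ.ker.card_mul_index, Subgroup.index_ker, MonoidHom.range_eq_top.2 hsurj,
      Subgroup.card_top, hζ.card_rootsOfUnity]
  rw [Nat.card_congr (hfiber.trans (MonoidHom.fiberEquivKerOfSurjective hsurj ζ')),
    Nat.eq_of_mul_eq_mul_right (NeZero.pos m) hker]

end IsAltNondegPairing

open Classical in
theorem card_pairs_weil_pairing_general {K : Type*} [Field K] [Fintype K]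
    (E : WeierstrassCurve K)
    (m d n : ℕ) (hm : 0 < m) (hmd : m ∣ d) (hd : d ∣ Nat.gcd n (Fintype.card K - 1))
    (hn : 0 < n)
    (htor : Nonempty ((torsionSubgroup (E⁄K).Point n) ≃+ ZMod d × ZMod n))
    (e : (E⁄K).Point → (E⁄K).Point → K)
    (hbil_left : ∀ P P' Q : (E⁄K).Point, m • P = 0 → m • P' = 0 → m • Q = 0 →
      e (P + P') Q = e P Q * e P' Q)
    (hbil_right : ∀ P Q Q' : (E⁄K).Point, m • P = 0 → m • Q = 0 → m • Q' = 0 →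
      e P (Q + Q') = e P Q * e P Q')
    (halt : ∀ P : (E⁄K).Point, m • P = 0 → e P P = 1)
    (hnondeg : ∀ P : (E⁄K).Point, m • P = 0 → (∀ Q : (E⁄K).Point, m • Q = 0 → e P Q = 1) → P = 0)
    (ζ : K) (hζ : orderOf ζ = m) :
    (Nat.card {PQ : (E⁄K).Point × (E⁄K).Point //
        addOrderOf PQ.1 = m ∧ addOrderOf PQ.2 = n ∧
          e PQ.1 ((n / m) • PQ.2) = ζ} : ℚ) =
      m * Nat.totient n * psiQ n / psiQ (n / d) := by
  obtain ⟨φ⟩ := htor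
  have hdn : d ∣ n := hd.trans (Nat.gcd_dvd_left _ _)
  have hmn : m ∣ n := hmd.trans hdn
  have : NeZero m := ⟨hm.ne'⟩
  have : NeZero d := ⟨ne_zero_of_dvd_ne_zero hn.ne' hdn⟩
  have : NeZero n := ⟨hn.ne'⟩
  have he : IsAltNondegPairing m e := ⟨hbil_left, hbil_right, halt, hnondeg⟩
  have htors : Nat.card {P : (E⁄K).Point // m • P = 0} = m * m := by
    rw [card_nsmul_eq_zero_eq_of_torsion_equiv φ hmn, card_prod_nsmul_eq_zero,
      ZMod.card_nsmul_eq_zero, ZMod.card_nsmul_eq_zero, Nat.gcd_eq_right hmd, Nat.gcd_eq_right hmn]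
  have hfiber (Q : (E⁄K).Point) (hQ : addOrderOf Q = n) :
      Nat.card {P // addOrderOf P = m ∧ e P ((n / m) • Q) = ζ} = m := by
    refine he.card_addOrderOf_eq_and_map_eq (hζ ▸ IsPrimitiveRoot.orderOf ζ) htors ?_
    rw [addOrderOf_nsmul_of_dvd (Nat.div_pos (Nat.le_of_dvd hn hmn) hm).ne'
      (hQ.symm ▸ Nat.div_dvd_of_dvd hmn), hQ, Nat.div_div_self hmn hn.ne']
  rw [Nat.card_subtype_prod_eq_mul hfiber, card_addOrderOf_eq_of_torsion_equiv φ,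
    eq_div_iff (psiQ_pos (Nat.div_pos (Nat.le_of_dvd hn hdn) (NeZero.pos d)).ne').ne']
  push_cast
  linear_combination (m : ℚ) * card_addOrderOf_eq_mul_psiQ hn.ne' hdn

open Classical in
/-- Lemma 4.2 of Howe's paper (point count on one curve): let `E` be an elliptic
curve over a finite field `F_q`, let `m ∣ d ∣ gcd(n, q−1)`, and suppose
`E[n](F_q) ≅ (ℤ/dℤ) × (ℤ/nℤ)`.  Let `e_m` be the Weil pairing on the `m`-torsion
(formalized here as any bilinear alternating nondegenerate pairing with values in
the `m`-th roots of unity of `F_q`), and let `ζ_m ∈ F_q` be a primitive `m`-th root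
of unity.  Then the number of pairs `(P, Q)` of points of `E(F_q)` with
`ord P = m`, `ord Q = n`, and `e_m(P, (n/m)Q) = ζ_m` equals `m·φ(n)·ψ(n)/ψ(n/d)`. -/
theorem card_pairs_weil_pairing {K : Type*} [Field K] [Fintype K]
    (E : WeierstrassCurve K) [E.IsElliptic]
    (m d n : ℕ) (hm : 0 < m) (hmd : m ∣ d) (hd : d ∣ Nat.gcd n (Fintype.card K - 1))
    (hn : 0 < n)
    (htor : Nonempty ((torsionSubgroup (E⁄K).Point n) ≃+ ZMod d × ZMod n))
    (e : (E⁄K).Point → (E⁄K).Point → K)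
    (hbil_left : ∀ P P' Q : (E⁄K).Point, m • P = 0 → m • P' = 0 → m • Q = 0 →
      e (P + P') Q = e P Q * e P' Q)
    (hbil_right : ∀ P Q Q' : (E⁄K).Point, m • P = 0 → m • Q = 0 → m • Q' = 0 →
      e P (Q + Q') = e P Q * e P Q')
    (halt : ∀ P : (E⁄K).Point, m • P = 0 → e P P = 1)
    (hnondeg : ∀ P : (E⁄K).Point, m • P = 0 → (∀ Q : (E⁄K).Point, m • Q = 0 → e P Q = 1) → P = 0)
    (ζ : K) (hζ : orderOf ζ = m) :
    (Nat.card {PQ : (E⁄K).Point × (E⁄K).Point //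
        addOrderOf PQ.1 = m ∧ addOrderOf PQ.2 = n ∧
          e PQ.1 ((n / m) • PQ.2) = ζ} : ℚ) =
      m * Nat.totient n * psiQ n / psiQ (n / d) :=
  card_pairs_weil_pairing_general E m d n hm hmd hd hn htor e hbil_left hbil_right halt hnondeg ζ hζ
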